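/- Let 𝒲 be a set of |T|×|A| real matrices each satisfying W Wᵀ = I, and let M be an |A|×|A| real matrix. Then W* maximizes Σ_{i ≤ j} (W M Wᵀ)²_{i,j} over 𝒲 if and only if (W*, Up(W* M W*ᵀ)) minimizes ‖M − Wᵀ Λ W‖²_F over pairs (W, Λ) with W ∈ 𝒲 and Λ upper-triangular. -/

import Mathlib

/-!
Since `W Wᵀ = 1`, conjugation by `W` is an isometry for the trace form, so
`‖M - Wᵀ Λ W‖² = ‖M‖² - 2⟨W M Wᵀ, Λ⟩ + ‖Λ‖²`. For upper-triangular `Λ`, completing the square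
entrywise turns this into `‖M‖² - Σ_{i ≤ j} (W M Wᵀ)ᵢⱼ² + ‖Λ - Up (W M Wᵀ)‖²`. Hence for fixed `W`
the best `Λ` is `Up (W M Wᵀ)`, with residual `‖M‖² - Σ_{i ≤ j} (W M Wᵀ)ᵢⱼ²`, and minimising the
residual over `W` is the same as maximising the upper-triangular energy.
-/

open Matrix

/-- The upper-triangular part of a matrix. -/
def Up {T : Type*} [LinearOrder T] (X : Matrix T T ℝ) : Matrix T T ℝ :=
  fun i j => if i ≤ j then X i j else 0

namespace Matrix

variable {m n R : Type*} [Fintype m] [Fintype n]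

theorem trace_mul_transpose_eq_sum [NonUnitalNonAssocSemiring R] (X Y : Matrix m n R) :
    trace (X * Yᵀ) = ∑ i, ∑ j, X i j * Y i j := by
  simp [trace, mul_apply, diag]

theorem trace_sub_conj_mul_transpose_sub [CommRing R] [DecidableEq m]
    {W : Matrix m n R} (hW : W * Wᵀ = 1) (M : Matrix n n R) (Λ : Matrix m m R) :
    trace ((M - Wᵀ * Λ * W) * (M - Wᵀ * Λ * W)ᵀ) =
      trace (M * Mᵀ) - 2 * trace (W * M * Wᵀ * Λᵀ) + trace (Λ * Λᵀ) := by
  set N := Wᵀ * Λ * W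
  have hNN : trace (N * Nᵀ) = trace (Λ * Λᵀ) := by
    have h : N * Nᵀ = Wᵀ * (Λ * Λᵀ * W) := by
      simp only [N, transpose_mul, transpose_transpose, Matrix.mul_assoc]
      rw [← Matrix.mul_assoc W, hW, Matrix.one_mul]
    rw [h, trace_mul_comm, Matrix.mul_assoc, hW, Matrix.mul_one]
  have hMN : trace (M * Nᵀ) = trace (W * M * Wᵀ * Λᵀ) := by
    have h : M * Nᵀ = M * Wᵀ * Λᵀ * W := by
      simp only [N, transpose_mul, transpose_transpose, Matrix.mul_assoc]
    rw [h, trace_mul_comm]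
    simp only [Matrix.mul_assoc]
  have hNM : trace (N * Mᵀ) = trace (M * Nᵀ) := by
    rw [← trace_transpose, transpose_mul, transpose_transpose]
  have h : (M - N) * (M - N)ᵀ = M * Mᵀ - M * Nᵀ - (N * Mᵀ - N * Nᵀ) := by
    simp only [transpose_sub]
    noncomm_ring
  rw [h, trace_sub, trace_sub, trace_sub, hNN, hNM, hMN]
  ring

end Matrix

section UpperTriangular

variable {T : Type*} [LinearOrder T]

theorem Up_apply_of_lt (X : Matrix T T ℝ) {i j : T} (h : j < i) : Up X i j = 0 :=
  if_neg (not_le.mpr h)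

theorem sq_sub_two_mul_eq_sq_sub_Up_sub {B Λ : Matrix T T ℝ} (hΛ : ∀ i j, j < i → Λ i j = 0)
    (i j : T) :
    Λ i j ^ 2 - 2 * (B i j * Λ i j) =
      (Λ i j - Up B i j) ^ 2 - (if i ≤ j then B i j ^ 2 else 0) := by
  by_cases h : i ≤ j
  · simp only [Up, if_pos h]
    ring
  · simp only [Up, if_neg h, hΛ i j (lt_of_not_ge h)]
    ring

variable [Fintype T] {A : Type*} [Fintype A]

theorem trace_residual_eq {W : Matrix T A ℝ} (hW : W * Wᵀ = 1) (M : Matrix A A ℝ)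
    {Λ : Matrix T T ℝ} (hΛ : ∀ i j, j < i → Λ i j = 0) :
    trace ((M - Wᵀ * Λ * W) * (M - Wᵀ * Λ * W)ᵀ) =
      trace (M * Mᵀ) - (∑ i, ∑ j, (if i ≤ j then ((W * M * Wᵀ) i j) ^ 2 else 0)) +
        ∑ i, ∑ j, (Λ i j - Up (W * M * Wᵀ) i j) ^ 2 := by
  have hsq := Fintype.sum_congr _ _ fun i => Fintype.sum_congr _ _ fun j =>
    sq_sub_two_mul_eq_sq_sub_Up_sub (B := W * M * Wᵀ) hΛ i j
  simp only [Finset.sum_sub_distrib, ← Finset.mul_sum] at hsq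
  rw [trace_sub_conj_mul_transpose_sub hW]
  simp only [trace_mul_transpose_eq_sum, pow_two] at hsq ⊢
  linarith

theorem trace_residual_Up_eq {W : Matrix T A ℝ} (hW : W * Wᵀ = 1) (M : Matrix A A ℝ) :
    trace ((M - Wᵀ * Up (W * M * Wᵀ) * W) * (M - Wᵀ * Up (W * M * Wᵀ) * W)ᵀ) =
      trace (M * Mᵀ) - ∑ i, ∑ j, (if i ≤ j then ((W * M * Wᵀ) i j) ^ 2 else 0) := by
  rw [trace_residual_eq hW M fun _ _ => Up_apply_of_lt _]
  simp

theorem trace_residual_Up_le {W : Matrix T A ℝ} (hW : W * Wᵀ = 1) (M : Matrix A A ℝ)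
    {Λ : Matrix T T ℝ} (hΛ : ∀ i j, j < i → Λ i j = 0) :
    trace ((M - Wᵀ * Up (W * M * Wᵀ) * W) * (M - Wᵀ * Up (W * M * Wᵀ) * W)ᵀ) ≤
      trace ((M - Wᵀ * Λ * W) * (M - Wᵀ * Λ * W)ᵀ) := by
  rw [trace_residual_Up_eq hW, trace_residual_eq hW M hΛ]
  have : 0 ≤ ∑ i, ∑ j, (Λ i j - Up (W * M * Wᵀ) i j) ^ 2 := by positivity
  linarith

end UpperTriangular

theorem stmt9_general {T A : Type*} [Fintype T] [LinearOrder T] [Fintype A]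
    (𝒲 : Set (Matrix T A ℝ)) (h𝒲 : ∀ W ∈ 𝒲, W * Wᵀ = 1)
    (M : Matrix A A ℝ) (Wstar : Matrix T A ℝ) (hWstar : Wstar ∈ 𝒲) :
    (∀ W ∈ 𝒲,
        (∑ i, ∑ j, (if i ≤ j then ((W * M * Wᵀ) i j) ^ 2 else 0)) ≤
          ∑ i, ∑ j, (if i ≤ j then ((Wstar * M * Wstarᵀ) i j) ^ 2 else 0)) ↔
      (∀ W ∈ 𝒲, ∀ Λ : Matrix T T ℝ, (∀ i j, j < i → Λ i j = 0) →
        Matrix.trace ((M - Wstarᵀ * Up (Wstar * M * Wstarᵀ) * Wstar) *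
            (M - Wstarᵀ * Up (Wstar * M * Wstarᵀ) * Wstar)ᵀ) ≤
          Matrix.trace ((M - Wᵀ * Λ * W) * (M - Wᵀ * Λ * W)ᵀ)) := by
  rw [trace_residual_Up_eq (h𝒲 _ hWstar)]
  constructor
  · intro hmax W hW Λ hΛ
    have := trace_residual_Up_le (h𝒲 W hW) M hΛ
    rw [trace_residual_Up_eq (h𝒲 W hW)] at this
    linarith [hmax W hW]
  · intro hmin W hW
    have := hmin W hW (Up (W * M * Wᵀ)) fun _ _ => Up_apply_of_lt _
    rw [trace_residual_Up_eq (h𝒲 W hW)] at this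
    linarith

theorem stmt9 {T A : Type*} [Fintype T] [LinearOrder T] [Fintype A] [LinearOrder A]
    (𝒲 : Set (Matrix T A ℝ)) (h𝒲 : ∀ W ∈ 𝒲, W * Wᵀ = 1)
    (M : Matrix A A ℝ) (Wstar : Matrix T A ℝ) (hWstar : Wstar ∈ 𝒲) :
    (∀ W ∈ 𝒲,
        (∑ i, ∑ j, (if i ≤ j then ((W * M * Wᵀ) i j) ^ 2 else 0)) ≤
          ∑ i, ∑ j, (if i ≤ j then ((Wstar * M * Wstarᵀ) i j) ^ 2 else 0)) ↔
      (∀ W ∈ 𝒲, ∀ Λ : Matrix T T ℝ, (∀ i j, j < i → Λ i j = 0) →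
        Matrix.trace ((M - Wstarᵀ * Up (Wstar * M * Wstarᵀ) * Wstar) *
            (M - Wstarᵀ * Up (Wstar * M * Wstarᵀ) * Wstar)ᵀ) ≤
          Matrix.trace ((M - Wᵀ * Λ * W) * (M - Wᵀ * Λ * W)ᵀ)) :=
  stmt9_general 𝒲 h𝒲 M Wstar hWstar
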